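/- For every measurable 2π-periodic u with e^{−u} integrable on [0,2π], the function Γ[u] is Lipschitz continuous with Lipschitz constant at most 2π‖K̂'‖_{L^∞}. Consequently, if λ > 0 and u ∈ X satisfies u = λΓ[u] almost everywhere, then u has a Lipschitz representative with Lipschitz constant at most 2πλ‖K̂'‖_{L^∞}; in particular every solution of u = λΓ[u] in X belongs to W^{1,2}. -/

import Mathlib

open MeasureTheory Filter Topology Real intervalIntegral

/-- `Γ[u](θ) = (∫₀^{2π} e^{-u})⁻¹ ∫₀^{2π} K̂(θ - θ') e^{-u(θ')} dθ'`. -/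
noncomputable def Gam (K u : ℝ → ℝ) (θ : ℝ) : ℝ :=
  (∫ t in (0:ℝ)..(2 * π), Real.exp (-(u t)))⁻¹ *
    ∫ t in (0:ℝ)..(2 * π), K (θ - t) * Real.exp (-(u t))

/-- Membership in `X = {u ∈ L²([0,2π]) : u(θ) = u(θ+π) a.e., u(θ) = u(2π-θ) a.e.,
∫₀^{2π} u = 0}`, for a (2π-periodic) representative `u : ℝ → ℝ`. -/
def MemX (u : ℝ → ℝ) : Prop :=
  MemLp u 2 (volume.restrict (Set.Ioc (0:ℝ) (2 * π))) ∧
  (∀ᵐ θ : ℝ, u (θ + π) = u θ) ∧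
  (∀ᵐ θ : ℝ, u (2 * π - θ) = u θ) ∧
  (∫ θ in (0:ℝ)..(2 * π), u θ) = 0

/-- `‖K̂‖_∞ = sup_{θ ∈ [0,2π]} |K̂(θ)|`. -/
noncomputable def supNorm (K : ℝ → ℝ) : ℝ := ⨆ θ : Set.Icc (0:ℝ) (2 * π), |K θ|

/-- The mean `∫₀^{2π} f dμ_u` of `f` against the probability measure `μ_u` with
density `e^{-u}/∫₀^{2π} e^{-u}`. -/
noncomputable def mAvg (u f : ℝ → ℝ) : ℝ :=
  (∫ t in (0:ℝ)..(2 * π), Real.exp (-(u t)))⁻¹ *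
    ∫ t in (0:ℝ)..(2 * π), f t * Real.exp (-(u t))

/-! `Γ[u](θ)` is an average of the translates `K̂(θ - ·)` against a probability density, so it
inherits every Lipschitz constant of `K̂`. A Lipschitz `K̂` is absolutely continuous, so the
fundamental theorem of calculus gives `|K̂ x - K̂ y| ≤ ‖K̂'‖_∞ |x - y|`, and `1 ≤ 2π`. A solution
of `u = λΓ[u]` is represented by the Lipschitz function `λΓ[u]` itself. -/

open scoped NNReal

theorem LipschitzWith.integral_eq_sub_of_ae_hasDerivAt {f f' : ℝ → ℝ} {C : ℝ≥0}
    (hf : LipschitzWith C f) (hf' : ∀ᵐ x, HasDerivAt f (f' x) x) (a b : ℝ) :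
    ∫ x in a..b, f' x = f b - f a := by
  rw [← hf.lipschitzOnWith.absolutelyContinuousOnInterval.integral_deriv_eq_sub]
  refine integral_congr_ae ?_
  filter_upwards [hf'] with x hx _ using hx.deriv.symm

theorem LipschitzWith.of_ae_hasDerivAt_memLp_top {f f' : ℝ → ℝ} {C : ℝ≥0}
    (hf : LipschitzWith C f) (hf' : ∀ᵐ x, HasDerivAt f (f' x) x) (hf'_mem : MemLp f' ⊤) :
    LipschitzWith (eLpNorm f' ⊤ volume).toNNReal f := by
  refine LipschitzWith.of_dist_le_mul fun x y => ?_
  have hbound : ∀ᵐ t, ‖f' t‖ ≤ (eLpNorm f' ⊤ volume).toReal := by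
    simpa only [toReal_eLpNorm hf'_mem.aestronglyMeasurable] using
      ae_le_lpNorm_exponent_top hf'_mem
  rw [dist_eq_norm, ← hf.integral_eq_sub_of_ae_hasDerivAt hf' y x, Real.dist_eq,
    ENNReal.coe_toNNReal_eq_toReal]
  exact norm_integral_le_of_norm_le_const_ae (hbound.mono fun t ht _ => ht)

theorem lipschitzWith_Gam {K : ℝ → ℝ} {L : ℝ≥0} (hK : LipschitzWith L K) (u : ℝ → ℝ)
    (hu : IntervalIntegrable (fun t => Real.exp (-(u t))) volume 0 (2 * π)) :
    LipschitzWith L (Gam K u) := by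
  set I := ∫ t in (0:ℝ)..(2 * π), Real.exp (-(u t))
  have hI : 0 ≤ I := integral_nonneg (by positivity) fun t _ => (Real.exp_pos _).le
  have hint : ∀ θ, IntervalIntegrable (fun t => K (θ - t) * Real.exp (-(u t))) volume 0 (2 * π) :=
    fun θ => hu.continuousOn_mul (hK.continuous.comp (continuous_sub_left θ)).continuousOn
  refine LipschitzWith.of_dist_le_mul fun θ₁ θ₂ => ?_
  calc dist (Gam K u θ₁) (Gam K u θ₂)
      = I⁻¹ * ‖∫ t in (0:ℝ)..(2 * π), (K (θ₁ - t) - K (θ₂ - t)) * Real.exp (-(u t))‖ := by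
        rw [dist_eq_norm, Gam, Gam, ← mul_sub, ← integral_sub (hint θ₁) (hint θ₂), norm_mul,
          norm_inv, Real.norm_of_nonneg hI]
        simp_rw [sub_mul]
    _ ≤ I⁻¹ * ∫ t in (0:ℝ)..(2 * π), L * dist θ₁ θ₂ * Real.exp (-(u t)) := by
        gcongr
        refine norm_integral_le_of_norm_le (by positivity) (ae_of_all _ fun t _ => ?_)
          (hu.const_mul _)
        rw [norm_mul, Real.norm_of_nonneg (Real.exp_pos _).le, ← dist_eq_norm]
        gcongr
        simpa only [dist_sub_right] using hK.dist_le_mul (θ₁ - t) (θ₂ - t)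
    _ = I⁻¹ * I * (L * dist θ₁ θ₂) := by rw [intervalIntegral.integral_const_mul]; ring
    _ ≤ L * dist θ₁ θ₂ := mul_le_of_le_one_left (by positivity) (inv_mul_le_one_of_le₀ le_rfl hI)

theorem gamma_lipschitz_general (K K' : ℝ → ℝ)
    (C : NNReal) (hKlip : LipschitzWith C K)
    (hK'deriv : ∀ᵐ θ : ℝ, HasDerivAt K (K' θ) θ)
    (hK'mem : MemLp K' ⊤ (volume : Measure ℝ)) :
    (∀ u : ℝ → ℝ, Measurable u → Function.Periodic u (2 * π) →
      IntervalIntegrable (fun t => Real.exp (-(u t))) volume 0 (2 * π) →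
      ∀ θ₁ θ₂ : ℝ, |Gam K u θ₁ - Gam K u θ₂| ≤
        2 * π * (eLpNorm K' ⊤ volume).toReal * |θ₁ - θ₂|) ∧
    (∀ lam : ℝ, 0 < lam → ∀ u : ℝ → ℝ, Measurable u → Function.Periodic u (2 * π) →
      MemX u →
      IntervalIntegrable (fun t => Real.exp (-(u t))) volume 0 (2 * π) →
      (u =ᵐ[volume] fun θ => lam * Gam K u θ) →
      ∃ v : ℝ → ℝ, u =ᵐ[volume] v ∧
        ∀ θ₁ θ₂ : ℝ, |v θ₁ - v θ₂| ≤
          2 * π * lam * (eLpNorm K' ⊤ volume).toReal * |θ₁ - θ₂|) := by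
  set M := (eLpNorm K' ⊤ volume).toReal
  have hGam : ∀ u : ℝ → ℝ,
      IntervalIntegrable (fun t => Real.exp (-(u t))) volume 0 (2 * π) →
      ∀ θ₁ θ₂ : ℝ, |Gam K u θ₁ - Gam K u θ₂| ≤ 2 * π * M * |θ₁ - θ₂| := by
    intro u hu θ₁ θ₂
    have h2π : 1 ≤ 2 * π := by linarith [Real.pi_gt_three]
    calc |Gam K u θ₁ - Gam K u θ₂| ≤ M * |θ₁ - θ₂| := by
          simpa only [Real.dist_eq, ENNReal.coe_toNNReal_eq_toReal] using
            (lipschitzWith_Gam (hKlip.of_ae_hasDerivAt_memLp_top hK'deriv hK'mem) u hu).dist_le_mul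
              θ₁ θ₂
      _ ≤ 2 * π * M * |θ₁ - θ₂| := by
          rw [mul_assoc]; exact le_mul_of_one_le_left (by positivity) h2π
  refine ⟨fun u _ _ hu => hGam u hu, fun lam hlam u _ _ _ hu hfix => ⟨_, hfix, fun θ₁ θ₂ => ?_⟩⟩
  calc |lam * Gam K u θ₁ - lam * Gam K u θ₂| = lam * |Gam K u θ₁ - Gam K u θ₂| := by
        rw [← mul_sub, abs_mul, abs_of_pos hlam]
    _ ≤ lam * (2 * π * M * |θ₁ - θ₂|) := by gcongr; exact hGam u hu θ₁ θ₂
    _ = 2 * π * lam * M * |θ₁ - θ₂| := by ring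

/-- `Γ[u]` is Lipschitz with constant at most `2π‖K̂'‖_∞`; consequently any solution
`u ∈ X` of `u = λΓ[u]` has a Lipschitz representative with constant `2πλ‖K̂'‖_∞`
(in particular it belongs to `W^{1,2}`). -/
theorem gamma_lipschitz (K K' : ℝ → ℝ) (hKper : Function.Periodic K (2 * π))
    (C : NNReal) (hKlip : LipschitzWith C K)
    (hK'deriv : ∀ᵐ θ : ℝ, HasDerivAt K (K' θ) θ)
    (hK'mem : MemLp K' ⊤ (volume : Measure ℝ)) :
    (∀ u : ℝ → ℝ, Measurable u → Function.Periodic u (2 * π) →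
      IntervalIntegrable (fun t => Real.exp (-(u t))) volume 0 (2 * π) →
      ∀ θ₁ θ₂ : ℝ, |Gam K u θ₁ - Gam K u θ₂| ≤
        2 * π * (eLpNorm K' ⊤ volume).toReal * |θ₁ - θ₂|) ∧
    (∀ lam : ℝ, 0 < lam → ∀ u : ℝ → ℝ, Measurable u → Function.Periodic u (2 * π) →
      MemX u →
      IntervalIntegrable (fun t => Real.exp (-(u t))) volume 0 (2 * π) →
      (u =ᵐ[volume] fun θ => lam * Gam K u θ) →
      ∃ v : ℝ → ℝ, u =ᵐ[volume] v ∧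
        ∀ θ₁ θ₂ : ℝ, |v θ₁ - v θ₂| ≤
          2 * π * lam * (eLpNorm K' ⊤ volume).toReal * |θ₁ - θ₂|) :=
  gamma_lipschitz_general K K' C hKlip hK'deriv hK'mem
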